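/- If u : ℝ → ℝ³ is a solution of the reduced equation of motion ü = Σ_{R ∈ 𝓡\{I}} (I−R)u/|(R−I)u|³ − Q u/|u|³ (with u(t) avoiding the rotation axes and the origin), then for every R₀ in the rotation group 𝓡 the configuration u_R(t) := R u(t), R ∈ 𝓡, solves the full Coulomb (N+1)-body system m ü_i = Σ_{j≠i} (u_i−u_j)/|u_i−u_j|³ − Q u_i/|u_i|³ with m = 1, N = |𝓡|. -/

import Mathlib

/-!
Every `R₀ ∈ 𝓡` acts on `ℝ³` as a linear isometry, so it commutes with `d²/dt²` and with the
Coulomb field `y ↦ y / ‖y‖³`. Applying `R₀` to the reduced equation therefore yields the equation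
of motion of `u_{R₀} = R₀ u`, once the interaction sum over `𝓡 \ {I}` is reindexed by `R ↦ R₀ R`.
This is a bijection onto `𝓡 \ {R₀}`: left multiplication by the invertible `R₀` maps the finite
set `𝓡` injectively into itself, hence onto it.
-/

open scoped Classical

noncomputable section

abbrev E3 : Type := EuclideanSpace ℝ (Fin 3)

/-- The action of a `3 × 3` real matrix on a point of Euclidean 3-space. -/
def act (A : Matrix (Fin 3) (Fin 3) ℝ) (x : E3) : E3 :=
  (WithLp.equiv 2 (Fin 3 → ℝ)).symm (A.mulVec ((WithLp.equiv 2 (Fin 3 → ℝ)) x))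

theorem Finset.sum_erase_one_comp_mul_left {M β : Type*} [Monoid M] [AddCommMonoid β]
    [DecidableEq M] {s : Finset M} {a : M} (ha : IsUnit a) (hs : ∀ x ∈ s, a * x ∈ s)
    (f : M → β) : ∑ x ∈ s.erase 1, f (a * x) = ∑ x ∈ s.erase a, f x := by
  have hinj : Function.Injective (a * ·) := fun _ _ h => ha.mul_left_cancel h
  have himage : s.image (a * ·) = s :=
    eq_of_subset_of_card_le (image_subset_iff.2 hs) (card_image_of_injective s hinj).ge
  rw [← sum_image fun x _ y _ h => hinj h, image_erase hinj, himage, mul_one]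

/-- Where `f` is not differentiable neither is `L ∘ f`, and both sides are `0`. -/
theorem ContinuousLinearEquiv.comp_deriv {𝕜 F G : Type*} [NontriviallyNormedField 𝕜]
    [NormedAddCommGroup F] [NormedSpace 𝕜 F] [NormedAddCommGroup G] [NormedSpace 𝕜 G]
    (L : F ≃L[𝕜] G) (f : 𝕜 → F) (x : 𝕜) : deriv (fun s => L (f s)) x = L (deriv f x) := by
  change fderiv 𝕜 (L ∘ f) x 1 = L (fderiv 𝕜 f x 1)
  rw [L.comp_fderiv]
  rfl

theorem ContinuousLinearEquiv.comp_deriv_deriv {𝕜 F G : Type*} [NontriviallyNormedField 𝕜]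
    [NormedAddCommGroup F] [NormedSpace 𝕜 F] [NormedAddCommGroup G] [NormedSpace 𝕜 G]
    (L : F ≃L[𝕜] G) (f : 𝕜 → F) (x : 𝕜) :
    deriv (deriv fun s => L (f s)) x = L (deriv (deriv f) x) := by
  rw [funext (L.comp_deriv f), L.comp_deriv]

theorem LinearIsometryEquiv.map_inv_norm_pow_smul {F G : Type*}
    [SeminormedAddCommGroup F] [NormedSpace ℝ F] [SeminormedAddCommGroup G] [NormedSpace ℝ G]
    (L : F ≃ₗᵢ[ℝ] G) (n : ℕ) (y : F) : L ((‖y‖ ^ n)⁻¹ • y) = (‖L y‖ ^ n)⁻¹ • L y := by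
  rw [L.norm_map, map_smul]

theorem act_eq_toEuclideanCLM (A : Matrix (Fin 3) (Fin 3) ℝ) (x : E3) :
    act A x = Matrix.toEuclideanCLM (𝕜 := ℝ) A x := rfl

theorem act_mul (A B : Matrix (Fin 3) (Fin 3) ℝ) (x : E3) : act (A * B) x = act A (act B x) := by
  rw [act_eq_toEuclideanCLM, map_mul]
  rfl

theorem act_sub (A B : Matrix (Fin 3) (Fin 3) ℝ) (x : E3) :
    act (A - B) x = act A x - act B x := by
  rw [act_eq_toEuclideanCLM, map_sub, sub_apply]
  rfl

theorem act_one (x : E3) : act 1 x = x := by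
  rw [act_eq_toEuclideanCLM, map_one]
  rfl

theorem norm_act_sub_comm (A B : Matrix (Fin 3) (Fin 3) ℝ) (x : E3) :
    ‖act (A - B) x‖ = ‖act (B - A) x‖ := by
  rw [act_sub, act_sub, norm_sub_rev]

def Matrix.UnitaryGroup.toEuclideanLinearIsometryEquiv {𝕜 n : Type*} [RCLike 𝕜] [Fintype n]
    [DecidableEq n] (A : Matrix.unitaryGroup n 𝕜) : EuclideanSpace 𝕜 n ≃ₗᵢ[𝕜] EuclideanSpace 𝕜 n :=
  Unitary.linearIsometryEquiv ⟨Matrix.toEuclideanCLM (n := n) (𝕜 := 𝕜) A, Unitary.map_mem _ A.2⟩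

theorem Matrix.UnitaryGroup.toEuclideanLinearIsometryEquiv_apply {𝕜 n : Type*} [RCLike 𝕜]
    [Fintype n] [DecidableEq n] (A : Matrix.unitaryGroup n 𝕜) (x : EuclideanSpace 𝕜 n) :
    toEuclideanLinearIsometryEquiv A x = Matrix.toEuclideanCLM (n := n) (𝕜 := 𝕜) A x := rfl

theorem deriv_deriv_act {R : Matrix (Fin 3) (Fin 3) ℝ}
    (hR : R ∈ Matrix.orthogonalGroup (Fin 3) ℝ) (u : ℝ → E3) (t : ℝ) :
    deriv (deriv fun s => act R (u s)) t = act R (deriv (deriv u) t) :=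
  (Matrix.UnitaryGroup.toEuclideanLinearIsometryEquiv ⟨R, hR⟩).toContinuousLinearEquiv
    |>.comp_deriv_deriv u t

theorem reduced_solution_gives_full_solution_general
    (𝓡 : Finset (Matrix (Fin 3) (Fin 3) ℝ))
    (hmul : ∀ R ∈ 𝓡, ∀ R' ∈ 𝓡, R * R' ∈ 𝓡)
    (hso : ∀ R ∈ 𝓡, R ∈ Matrix.orthogonalGroup (Fin 3) ℝ ∧ R.det = 1)
    (Q : ℝ)
    (u : ℝ → E3)
    (hode : ∀ t, deriv (deriv u) t =
      (∑ R ∈ 𝓡.erase 1, (‖act (R - 1) (u t)‖ ^ 3)⁻¹ • act (1 - R) (u t))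
        - (‖u t‖ ^ 3)⁻¹ • (Q • u t)) :
    ∀ R₀ ∈ 𝓡, ∀ t : ℝ,
      deriv (deriv (fun s => act R₀ (u s))) t =
        (∑ R' ∈ 𝓡.erase R₀, (‖act R₀ (u t) - act R' (u t)‖ ^ 3)⁻¹ •
            (act R₀ (u t) - act R' (u t)))
          - (‖act R₀ (u t)‖ ^ 3)⁻¹ • (Q • act R₀ (u t)) := by
  intro R₀ hR₀ t
  have hU : R₀ ∈ Matrix.orthogonalGroup (Fin 3) ℝ := (hso R₀ hR₀).1
  set L := Matrix.UnitaryGroup.toEuclideanLinearIsometryEquiv ⟨R₀, hU⟩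
  have hL (x : E3) : act R₀ x = L x :=
    (Matrix.UnitaryGroup.toEuclideanLinearIsometryEquiv_apply ⟨R₀, hU⟩ x).symm
  rw [deriv_deriv_act hU, hode t]
  simp only [hL]
  rw [map_sub, map_sum,
    ← Finset.sum_erase_one_comp_mul_left (Unitary.isUnit_coe (U := ⟨R₀, hU⟩)) (hmul R₀ hR₀)]
  congr 1
  · refine Finset.sum_congr rfl fun R _ => ?_
    have hdiff : L (act (1 - R) (u t)) = L (u t) - act (R₀ * R) (u t) := by
      rw [act_sub, act_one, map_sub, act_mul]
      rfl
    rw [norm_act_sub_comm, L.map_inv_norm_pow_smul, hdiff]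
  · rw [smul_comm, map_smul, L.map_inv_norm_pow_smul, smul_comm]

/-- a collision-free solution of the reduced equation of motion gives, by the
symmetry `u_R = R u_I`, a solution of the full Coulomb `(N+1)`-body problem. -/
theorem reduced_solution_gives_full_solution
    (𝓡 : Finset (Matrix (Fin 3) (Fin 3) ℝ))
    (hone : (1 : Matrix (Fin 3) (Fin 3) ℝ) ∈ 𝓡)
    (hmul : ∀ R ∈ 𝓡, ∀ R' ∈ 𝓡, R * R' ∈ 𝓡)
    (hinv : ∀ R ∈ 𝓡, R⁻¹ ∈ 𝓡)
    (hso : ∀ R ∈ 𝓡, R ∈ Matrix.orthogonalGroup (Fin 3) ℝ ∧ R.det = 1)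
    (Q : ℝ) (hQ : 0 < Q)
    (u : ℝ → E3) (hu : ContDiff ℝ 2 u)
    (hne0 : ∀ t, u t ≠ 0)
    (hax : ∀ t, ∀ R ∈ 𝓡, R ≠ 1 → act (R - 1) (u t) ≠ 0)
    (hode : ∀ t, deriv (deriv u) t =
      (∑ R ∈ 𝓡.erase 1, (‖act (R - 1) (u t)‖ ^ 3)⁻¹ • act (1 - R) (u t))
        - (‖u t‖ ^ 3)⁻¹ • (Q • u t)) :
    ∀ R₀ ∈ 𝓡, ∀ t : ℝ,
      deriv (deriv (fun s => act R₀ (u s))) t =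
        (∑ R' ∈ 𝓡.erase R₀, (‖act R₀ (u t) - act R' (u t)‖ ^ 3)⁻¹ •
            (act R₀ (u t) - act R' (u t)))
          - (‖act R₀ (u t)‖ ^ 3)⁻¹ • (Q • act R₀ (u t)) :=
  reduced_solution_gives_full_solution_general 𝓡 hmul hso Q u hode
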